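/- Simons' identity: for a smooth immersed hypersurface f : Mⁿ → ℝ^{n+1} with second fundamental form A_{ij} and mean curvature H = g^{ij}A_{ij}, the Laplace–Beltrami operator satisfies ΔA_{ij} = ∇ᵢ∇ⱼH + H·A_iˡA_{lj} − ‖A‖²·A_{ij}. -/

import Mathlib

/-!
Contract the Ricci identity for `∇ₚ∇ᵢA_{pj} − ∇ᵢ∇ₚA_{pj}` over `p`. By the Codazzi
equations the left-hand side is `∇ₚ∇ₚA_{ij} − ∇ᵢ∇ⱼA_{pp}`, so summing gives `ΔA_{ij} − ∇ᵢ∇ⱼH`.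
With the Gauss equation the contracted curvature term is `H·(A²)_{ij} − ‖A‖²·A_{ij}`: of its four
summands, the two cubic terms `A_{pm}A_{ip}A_{mj}` and `A_{pj}A_{im}A_{pm}` cancel by symmetry of `A`.
-/

open Finset

theorem hessian_trace_eq_add_curvature {ι M : Type*} [AddCommGroup M] (A₃ C : ι → ι → ι → ι → M)
    (hCod1 : ∀ i j k l, A₃ i j k l = A₃ i k j l)
    (hCod2 : ∀ i j k l, A₃ i j k l = A₃ i j l k)
    (hComm : ∀ i j k l, A₃ i j k l - A₃ j i k l = C i j k l) (p i j : ι) :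
    A₃ p p i j = A₃ i j p p + C p i p j := by
  have h := hComm p i p j
  rw [← hCod1 p p i j, hCod2 i p p j, ← hCod1 i j p p] at h
  exact eq_add_of_sub_eq' h

theorem sum_gauss_curvature_contraction {ι R : Type*} [Fintype ι] [CommRing R] (A : ι → ι → R)
    (hA : ∀ i j, A i j = A j i) (i j : ι) :
    ∑ p, ∑ m, ((A p p * A i m - A p m * A i p) * A m j
        + (A p j * A i m - A p m * A i j) * A p m)
      = (∑ k, A k k) * (∑ l, A i l * A l j) - (∑ k, ∑ l, A k l * A k l) * A i j := by
  have cancel : ∑ p, ∑ m, A p m * A i p * A m j = ∑ p, ∑ m, A p j * A i m * A p m := by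
    rw [sum_comm]
    refine sum_congr rfl fun p _ => sum_congr rfl fun m _ => ?_
    rw [hA m p]
    ring
  have expand : ∀ p m, (A p p * A i m - A p m * A i p) * A m j
      + (A p j * A i m - A p m * A i j) * A p m
      = A p p * (A i m * A m j) - A p m * A i p * A m j
        + A p j * A i m * A p m - A p m * A p m * A i j := fun p m => by ring
  simp only [expand, sum_add_distrib, sum_sub_distrib, cancel, ← mul_sum, sum_mul]
  ring

/-- Simons' identity in an orthonormal frame at a point. Here `A i j` are the components
of the second fundamental form, `A₃ i j k l` the components of `∇ᵢ∇ⱼA_{kl}`, the mean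
curvature is `H = ∑ k, A k k`, and `‖A‖² = ∑ k l, (A k l)²`. The hypotheses are: symmetry
of `A`; the Codazzi equations (symmetry of `∇∇A` in all but the outermost index); and the
commutation rule for interchanging covariant derivatives on a 2-tensor, with the Gauss
equation `R_{ijkl} = A_{ik}A_{jl} − A_{il}A_{jk}` substituted. The conclusion is
`ΔA_{ij} = ∇ᵢ∇ⱼH + H·(A²)_{ij} − ‖A‖²·A_{ij}`. -/
theorem stmt_19 (n : ℕ) (A : Fin n → Fin n → ℝ)
    (A₃ : Fin n → Fin n → Fin n → Fin n → ℝ)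
    (hAsym : ∀ i j, A i j = A j i)
    (hCod1 : ∀ i j k l, A₃ i j k l = A₃ i k j l)
    (hCod2 : ∀ i j k l, A₃ i j k l = A₃ i j l k)
    (hComm : ∀ i j k l, A₃ i j k l - A₃ j i k l =
      ∑ m : Fin n, ((A i k * A j m - A i m * A j k) * A m l
          + (A i l * A j m - A i m * A j l) * A k m)) :
    ∀ i j, ∑ p : Fin n, A₃ p p i j =
      (∑ k : Fin n, A₃ i j k k)
      + (∑ k : Fin n, A k k) * (∑ l : Fin n, A i l * A l j)
      - (∑ k : Fin n, ∑ l : Fin n, A k l * A k l) * A i j := by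
  intro i j
  rw [sum_congr rfl fun p _ => hessian_trace_eq_add_curvature A₃ _ hCod1 hCod2 hComm p i j,
    sum_add_distrib, sum_gauss_curvature_contraction A hAsym, add_sub_assoc]
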